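/- Suppose ‖T(t,s)‖ ≤ Me^{λ̄|t−s|+ε|s|} for all t,s, and f satisfies (F1), (F2), (F3) (with η ≤ 1) and (F4). Then there exists a constant c > 0 such that for every n ∈ ℤ, every t ∈ [n,n+1] and every x ∈ ℝ^d, the backward solution satisfies ‖φ(n,t;x) − T(n,t)x‖ ≤ c‖x‖². -/

import Mathlib

/-! On an interval of length one the growth bound gives `‖T(s,r)‖ ≤ M e^λ̄ e^{ε|r|}`, and the
weights `e^{-3ε|r|}` of (F3) and `e^{-4ε|r|}` of (F4) absorb the factors `e^{ε|r|}`. Hence the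
variation-of-parameters formula and Grönwall's inequality bound the backward solution,
`‖φ(s,t;x)‖ ≤ C e^{ε|t|} ‖x‖` for `s ∈ [t-1, t]`. By (F1), (F2) and (F4), `f(s,·)` is quadratically
small, `‖f(s,y)‖ ≤ B e^{-4ε|s|} ‖y‖²`, and inserting the bound on `φ` into
`φ(n,t;x) - T(n,t)x = ∫_t^n T(n,s) f(s, φ(s,t;x)) ds` gives `c ‖x‖²`. -/

noncomputable section

/-- `ℝ^d` -/
abbrev Ed (d : ℕ) := Fin d → ℝ

open Set Real

section MapZero

variable {E F : Type*} [NormedAddCommGroup E] [NormedSpace ℝ E]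
  [NormedAddCommGroup F] [NormedSpace ℝ F] {f : E → F} {f' : E → E →L[ℝ] F}

theorem norm_le_mul_norm_of_hasFDerivAt_of_map_zero {C : ℝ}
    (hf : ∀ x, HasFDerivAt f (f' x) x) (h0 : f 0 = 0) (hC : ∀ x, ‖f' x‖ ≤ C) (y : E) :
    ‖f y‖ ≤ C * ‖y‖ := by
  simpa [h0] using convex_univ.norm_image_sub_le_of_norm_hasFDerivWithin_le
    (fun x _ => (hf x).hasFDerivWithinAt) (fun x _ => hC x) (mem_univ 0) (mem_univ y)

theorem norm_le_mul_sq_of_hasFDerivAt_of_map_zero {L : ℝ} (hL : 0 ≤ L)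
    (hf : ∀ x, HasFDerivAt f (f' x) x) (h0 : f 0 = 0) (h0' : f' 0 = 0)
    (hlip : ∀ x y, ‖f' x - f' y‖ ≤ L * ‖x - y‖) (y : E) :
    ‖f y‖ ≤ L * ‖y‖ ^ 2 := by
  have hball : ∀ z ∈ Metric.closedBall (0 : E) ‖y‖, ‖f' z‖ ≤ L * ‖y‖ := fun z hz => by
    have hz' : ‖z‖ ≤ ‖y‖ := by simpa using hz
    simpa [h0'] using (hlip z 0).trans (by rw [sub_zero]; gcongr)
  have := (convex_closedBall (0 : E) ‖y‖).norm_image_sub_le_of_norm_hasFDerivWithin_le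
    (fun x _ => (hf x).hasFDerivWithinAt) hball (Metric.mem_closedBall_self (norm_nonneg y))
    (mem_closedBall_zero_iff.2 le_rfl)
  simpa [h0, sq, mul_assoc] using this

end MapZero

theorem add_mul_gronwallBound_zero (K C x : ℝ) :
    C + K * gronwallBound 0 K C x = C * exp (K * x) := by
  rcases eq_or_ne K 0 with rfl | hK
  · simp
  · rw [gronwallBound_of_K_ne_0 hK]
    field_simp
    ring

theorem le_mul_exp_of_le_add_mul_integral {u : ℝ → ℝ} {a b C K : ℝ} (hK : 0 ≤ K)
    (hu : Continuous u) (h : ∀ s ∈ Icc a b, u s ≤ C + K * ∫ r in s..b, u r) :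
    ∀ s ∈ Icc a b, u s ≤ C * exp (K * (b - s)) := by
  set G : ℝ → ℝ := fun σ => ∫ r in (b - σ)..b, u r
  have hG : ∀ σ, HasDerivAt G (u (b - σ)) σ := fun σ => by
    simpa [Function.comp_def] using (intervalIntegral.integral_hasDerivAt_left
      (hu.intervalIntegrable _ b) (hu.stronglyMeasurableAtFilter _ _) hu.continuousAt).comp σ
      ((hasDerivAt_id σ).const_sub b)
  have hG_le : ∀ σ ∈ Icc 0 (b - a), G σ ≤ gronwallBound 0 K C (σ - 0) :=
    le_gronwallBound_of_liminf_deriv_right_le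
      (Differentiable.continuous fun σ => (hG σ).differentiableAt).continuousOn
      (fun σ _ _ hr => (hG σ).hasDerivWithinAt.liminf_right_slope_le hr) (by simp [G])
      (fun σ hσ => by
        have := h (b - σ) ⟨by linarith [hσ.2], by linarith [hσ.1]⟩
        linarith)
  intro s hs
  calc u s ≤ C + K * G (b - s) := by simpa [G] using h s hs
    _ ≤ C + K * gronwallBound 0 K C (b - s) := by
      gcongr
      simpa using hG_le (b - s) ⟨by linarith [hs.2], by linarith [hs.1]⟩
    _ = C * exp (K * (b - s)) := add_mul_gronwallBound_zero K C _

section EvolutionFamily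

variable {E : Type*} [NormedAddCommGroup E] [NormedSpace ℝ E]

def HasNonuniformBoundedGrowth (T : ℝ → ℝ → E →L[ℝ] E) (M lamBar eps : ℝ) : Prop :=
  ∀ t s, ‖T t s‖ ≤ M * exp (lamBar * |t - s| + eps * |s|)

variable {T : ℝ → ℝ → E →L[ℝ] E} {M lamBar eps : ℝ}

theorem HasNonuniformBoundedGrowth.norm_le_of_abs_sub_le_one
    (hT : HasNonuniformBoundedGrowth T M lamBar eps) (hM : 0 ≤ M) (hlamBar : 0 ≤ lamBar)
    {t s : ℝ} (hts : |t - s| ≤ 1) : ‖T t s‖ ≤ M * exp lamBar * exp (eps * |s|) := by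
  calc ‖T t s‖ ≤ M * exp (lamBar * |t - s| + eps * |s|) := hT t s
    _ ≤ M * exp (lamBar + eps * |s|) := by gcongr; nlinarith
    _ = M * exp lamBar * exp (eps * |s|) := by rw [exp_add, mul_assoc]

theorem HasNonuniformBoundedGrowth.norm_le_of_eq_add_integral
    (hT : HasNonuniformBoundedGrowth T M lamBar eps) (hM : 0 ≤ M) (hlamBar : 0 ≤ lamBar)
    {g : ℝ → E → E} (hg : ∀ r z, ‖g r z‖ ≤ exp (-(eps * |r|)) * ‖z‖)
    {y : ℝ → E} (hy : Continuous y) {t : ℝ} {x : E}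
    (hvop : ∀ s ∈ Icc (t - 1) t, y s = T s t x + ∫ r in t..s, T s r (g r (y r))) :
    ∀ s ∈ Icc (t - 1) t,
      ‖y s‖ ≤ M * exp lamBar * exp (eps * |t|) * ‖x‖ * exp (M * exp lamBar) := by
  set K := M * exp lamBar
  have hK : 0 ≤ K := by positivity
  have hTg : ∀ s r z, |s - r| ≤ 1 → ‖T s r (g r z)‖ ≤ K * ‖z‖ := fun s r z hsr => calc
    ‖T s r (g r z)‖ ≤ ‖T s r‖ * ‖g r z‖ := (T s r).le_opNorm _
    _ ≤ K * exp (eps * |r|) * (exp (-(eps * |r|)) * ‖z‖) :=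
      mul_le_mul (hT.norm_le_of_abs_sub_le_one hM hlamBar hsr) (hg r z) (norm_nonneg _)
        (by positivity)
    _ = K * ‖z‖ := by rw [exp_neg]; field_simp
  have hint : ∀ s ∈ Icc (t - 1) t,
      ‖y s‖ ≤ K * exp (eps * |t|) * ‖x‖ + K * ∫ r in s..t, ‖y r‖ := fun s hs => by
    have hTt : ‖T s t x‖ ≤ K * exp (eps * |t|) * ‖x‖ :=
      (T s t).le_of_opNorm_le (hT.norm_le_of_abs_sub_le_one hM hlamBar
        (by rw [abs_le]; constructor <;> linarith [hs.1, hs.2])) x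
    have hI : ‖∫ r in t..s, T s r (g r (y r))‖ ≤ K * ∫ r in s..t, ‖y r‖ := by
      rw [intervalIntegral.integral_symm, norm_neg, ← intervalIntegral.integral_const_mul]
      refine intervalIntegral.norm_integral_le_of_norm_le hs.2
        (Filter.Eventually.of_forall fun r hr => hTg s r _ ?_)
        ((continuous_const.mul hy.norm).intervalIntegrable _ _)
      rw [abs_le]; constructor <;> linarith [hs.1, hr.1, hr.2]
    rw [hvop s hs]
    exact (norm_add_le _ _).trans (add_le_add hTt hI)
  intro s hs
  calc ‖y s‖ ≤ K * exp (eps * |t|) * ‖x‖ * exp (K * (t - s)) :=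
        le_mul_exp_of_le_add_mul_integral hK hy.norm hint s hs
    _ ≤ K * exp (eps * |t|) * ‖x‖ * exp K := by gcongr; nlinarith [hs.1]

theorem HasNonuniformBoundedGrowth.norm_integral_le_of_quadratic
    (hT : HasNonuniformBoundedGrowth T M lamBar eps) (hM : 0 ≤ M) (hlamBar : 0 ≤ lamBar)
    (heps : 0 ≤ eps) {g : ℝ → E → E} {L : ℝ} (hL : 0 ≤ L)
    (hg : ∀ r z, ‖g r z‖ ≤ L * exp (-3 * eps * |r|) * ‖z‖ ^ 2)
    {y : ℝ → E} {a b R : ℝ} (hab : a ≤ b) (hba : b ≤ a + 1)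
    (hy : ∀ r ∈ Icc a b, ‖y r‖ ≤ R * exp (eps * |b|)) :
    ‖∫ r in a..b, T a r (g r (y r))‖ ≤ M * exp lamBar * L * R ^ 2 * exp (2 * eps) := by
  set K := M * exp lamBar
  have hpt : ∀ r ∈ uIoc a b, ‖T a r (g r (y r))‖ ≤ K * L * R ^ 2 * exp (2 * eps) := by
    intro r hr
    rw [uIoc_of_le hab] at hr
    have hE : exp (eps * |r|) * exp (-3 * eps * |r|) * exp (eps * |b|) ^ 2 ≤ exp (2 * eps) := by
      have hbr : |b| ≤ |r| + 1 := by
        have := abs_sub_abs_le_abs_sub b r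
        rw [abs_of_nonneg (by linarith [hr.2] : 0 ≤ b - r)] at this
        linarith [hr.1]
      rw [sq, ← exp_add, ← exp_add, ← exp_add]
      exact exp_le_exp.2 (by nlinarith [mul_le_mul_of_nonneg_left hbr heps])
    calc ‖T a r (g r (y r))‖ ≤ ‖T a r‖ * ‖g r (y r)‖ := (T a r).le_opNorm _
      _ ≤ K * exp (eps * |r|) * (L * exp (-3 * eps * |r|) * (R * exp (eps * |b|)) ^ 2) := by
        refine mul_le_mul (hT.norm_le_of_abs_sub_le_one hM hlamBar ?_) ((hg r _).trans ?_)
          (norm_nonneg _) (by positivity)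
        · rw [abs_le]; constructor <;> linarith [hr.1, hr.2]
        · gcongr; exact hy r ⟨hr.1.le, hr.2⟩
      _ = K * L * R ^ 2 * (exp (eps * |r|) * exp (-3 * eps * |r|) * exp (eps * |b|) ^ 2) := by
        ring
      _ ≤ K * L * R ^ 2 * exp (2 * eps) := by gcongr
  calc ‖∫ r in a..b, T a r (g r (y r))‖ ≤ K * L * R ^ 2 * exp (2 * eps) * |b - a| :=
        intervalIntegral.norm_integral_le_of_norm_le_const hpt
    _ ≤ K * L * R ^ 2 * exp (2 * eps) :=
      mul_le_of_le_one_right (by positivity) (abs_le.2 ⟨by linarith, by linarith⟩)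

end EvolutionFamily

theorem backward_solution_quadratic_estimate_general (d : ℕ)
    -- the linear equation x' = A(t)x and its evolution family T(t,s)
    (A : ℝ → Ed d →L[ℝ] Ed d) (T : ℝ → ℝ → Ed d →L[ℝ] Ed d)
    (M lamBar eps η : ℝ) (hM : 0 < M) (hlamBar : 0 < lamBar) (heps : 0 ≤ eps)
    (hη1 : η ≤ 1)
    (hgrowth : ∀ t s, ‖T t s‖ ≤ M * Real.exp (lamBar * |t - s| + eps * |s|))
    -- the perturbation f, continuous, C¹ in x with jointly continuous derivative
    (f : ℝ → Ed d → Ed d) (Df : ℝ → Ed d → (Ed d →L[ℝ] Ed d))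
    (hf_diff : ∀ t x, HasFDerivAt (f t) (Df t x) x)
    -- (F1), (F2), (F3), (F4)
    (B : ℝ) (hB : 0 < B)
    (hF1 : ∀ t, f t 0 = 0)
    (hF2 : ∀ t, Df t 0 = 0)
    (hF3 : ∀ t x, ‖Df t x‖ ≤ η * Real.exp (-3 * eps * |t|))
    (hF4 : ∀ t x y, ‖Df t x - Df t y‖ ≤ B * Real.exp (-4 * eps * |t|) * ‖x - y‖)
    -- φ(t,t₀;x): the globally defined solution of x' = A(t)x + f(t,x), C¹ in x,
    -- satisfying the variation-of-parameters formula
    (φ : ℝ → ℝ → Ed d → Ed d)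
    (hφ_sol : ∀ t₀ x t, HasDerivAt (fun τ => φ τ t₀ x) (A t (φ t t₀ x) + f t (φ t t₀ x)) t)
    (hvop : ∀ t t₀ x, φ t t₀ x = T t t₀ x + ∫ s in t₀..t, T t s (f s (φ s t₀ x))) :
    -- then there is c > 0 with ‖φ(n,t;x) − T(n,t)x‖ ≤ c ‖x‖²
    -- for all n ∈ ℤ, t ∈ [n, n+1] and x ∈ ℝ^d
    ∃ c : ℝ, 0 < c ∧
      ∀ (n : ℤ) (t : ℝ) (x : Ed d), t ∈ Set.Icc (n : ℝ) ((n : ℝ) + 1) →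
        ‖φ (n : ℝ) t x - T (n : ℝ) t x‖ ≤ c * ‖x‖ ^ 2 := by
  have hf_lin : ∀ r z, ‖f r z‖ ≤ exp (-(eps * |r|)) * ‖z‖ := fun r =>
    norm_le_mul_norm_of_hasFDerivAt_of_map_zero (hf_diff r) (hF1 r) fun z => calc
      ‖Df r z‖ ≤ η * exp (-3 * eps * |r|) := hF3 r z
      _ ≤ 1 * exp (-(eps * |r|)) :=
        mul_le_mul hη1 (exp_le_exp.2 (by nlinarith [abs_nonneg r])) (exp_pos _).le zero_le_one
      _ = exp (-(eps * |r|)) := one_mul _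
  have hf_quad : ∀ r z, ‖f r z‖ ≤ B * exp (-3 * eps * |r|) * ‖z‖ ^ 2 := fun r z =>
    (norm_le_mul_sq_of_hasFDerivAt_of_map_zero (by positivity) (hf_diff r) (hF1 r) (hF2 r)
      (hF4 r) z).trans (by gcongr; nlinarith [abs_nonneg r])
  set K := M * exp lamBar
  refine ⟨K * B * (K * exp K) ^ 2 * exp (2 * eps), by positivity, fun n t x ht => ?_⟩
  have hφ_bound := HasNonuniformBoundedGrowth.norm_le_of_eq_add_integral hgrowth hM.le
    hlamBar.le hf_lin (Differentiable.continuous fun s => (hφ_sol t x s).differentiableAt)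
    (fun s _ => hvop s t x)
  have hquad := HasNonuniformBoundedGrowth.norm_integral_le_of_quadratic hgrowth hM.le
    hlamBar.le heps hB.le hf_quad ht.1 ht.2 (R := K * exp K * ‖x‖) fun r hr =>
      (hφ_bound r ⟨by linarith [hr.1, ht.2], hr.2⟩).trans_eq (by ring)
  rw [hvop, add_sub_cancel_left, intervalIntegral.integral_symm, norm_neg]
  exact hquad.trans_eq (by ring)

theorem backward_solution_quadratic_estimate (d : ℕ)
    -- the linear equation x' = A(t)x and its evolution family T(t,s)
    (A : ℝ → Ed d →L[ℝ] Ed d) (T : ℝ → ℝ → Ed d →L[ℝ] Ed d)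
    (hT_id : ∀ t, T t t = ContinuousLinearMap.id ℝ (Ed d))
    (hT_comp : ∀ t s r, (T t s).comp (T s r) = T t r)
    (hT_deriv : ∀ s x t, HasDerivAt (fun τ => T τ s x) (A t (T t s x)) t)
    (M lamBar eps η : ℝ) (hM : 0 < M) (hlamBar : 0 < lamBar) (heps : 0 ≤ eps)
    (hη : 0 < η) (hη1 : η ≤ 1)
    (hgrowth : ∀ t s, ‖T t s‖ ≤ M * Real.exp (lamBar * |t - s| + eps * |s|))
    -- the perturbation f, continuous, C¹ in x with jointly continuous derivative
    (f : ℝ → Ed d → Ed d) (Df : ℝ → Ed d → (Ed d →L[ℝ] Ed d))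
    (hf_cont : Continuous (fun p : ℝ × Ed d => f p.1 p.2))
    (hf_diff : ∀ t x, HasFDerivAt (f t) (Df t x) x)
    (hDf_cont : Continuous (fun p : ℝ × Ed d => Df p.1 p.2))
    -- (F1), (F2), (F3), (F4)
    (B : ℝ) (hB : 0 < B)
    (hF1 : ∀ t, f t 0 = 0)
    (hF2 : ∀ t, Df t 0 = 0)
    (hF3 : ∀ t x, ‖Df t x‖ ≤ η * Real.exp (-3 * eps * |t|))
    (hF4 : ∀ t x y, ‖Df t x - Df t y‖ ≤ B * Real.exp (-4 * eps * |t|) * ‖x - y‖)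
    -- φ(t,t₀;x): the globally defined solution of x' = A(t)x + f(t,x), C¹ in x,
    -- satisfying the variation-of-parameters formula
    (φ : ℝ → ℝ → Ed d → Ed d) (Dφ : ℝ → ℝ → Ed d → (Ed d →L[ℝ] Ed d))
    (hφ_init : ∀ t₀ x, φ t₀ t₀ x = x)
    (hφ_sol : ∀ t₀ x t, HasDerivAt (fun τ => φ τ t₀ x) (A t (φ t t₀ x) + f t (φ t t₀ x)) t)
    (hφ_diff : ∀ t t₀ x, HasFDerivAt (φ t t₀) (Dφ t t₀ x) x)
    (hvop : ∀ t t₀ x, φ t t₀ x = T t t₀ x + ∫ s in t₀..t, T t s (f s (φ s t₀ x))) :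
    -- then there is c > 0 with ‖φ(n,t;x) − T(n,t)x‖ ≤ c ‖x‖²
    -- for all n ∈ ℤ, t ∈ [n, n+1] and x ∈ ℝ^d
    ∃ c : ℝ, 0 < c ∧
      ∀ (n : ℤ) (t : ℝ) (x : Ed d), t ∈ Set.Icc (n : ℝ) ((n : ℝ) + 1) →
        ‖φ (n : ℝ) t x - T (n : ℝ) t x‖ ≤ c * ‖x‖ ^ 2 :=
  backward_solution_quadratic_estimate_general d A T M lamBar eps η hM hlamBar heps hη1 hgrowth f Df
    hf_diff B hB hF1 hF2 hF3 hF4 φ hφ_sol hvop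

end
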